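/- arXiv:1604.07814 — 4 statements merged into one kernel-verified Lean document; each statement's English description precedes it below -/
import Mathlib

section
/- Let c > 0 and x ∈ X. The matrix Q_d + cI is positive definite; set ξ(x) = (Q_d + cI)^{-1}( c x − Q_z x − q/2 ). Then a point u ∈ X minimizes z ↦ Σ_{i=1}^m [ f(z^i, x^{-i}) + c‖z^i − x^i‖² ] over X if and only if u minimizes z ↦ (z − ξ(x))ᵀ(Q_d + cI)(z − ξ(x)) over X; that is, the regularized Jacobi update of x equals the projection of ξ(x) onto X with respect to the norm ‖·‖_{Q_d + cI}. -/
open Matrix Filter Topology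
open scoped RealInnerProductSpace

noncomputable section

/-- The product decision space of `m` agents, agent `i` having an `n i`-dimensional
Euclidean decision vector; equipped with the (ℓ²-of-ℓ²) Euclidean norm. -/
abbrev JVec (m : ℕ) (n : Fin m → ℕ) :=
  PiLp 2 (fun i : Fin m => EuclideanSpace ℝ (Fin (n i)))

/-- `upd x i z` is the vector `(z, x^{-i})`: `x` with its `i`-th block replaced by `z`. -/
def upd {m : ℕ} {n : Fin m → ℕ} (x : JVec m n) (i : Fin m)
    (z : EuclideanSpace ℝ (Fin (n i))) : JVec m n :=
  WithLp.toLp 2 (Function.update x i z)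
/-- The index set of the stacked vector `x = (x^1, …, x^m)`. -/
abbrev JIdx (m : ℕ) (n : Fin m → ℕ) := Σ i : Fin m, Fin (n i)

/-- Flatten a block vector into a plain vector indexed by `JIdx m n`. -/
def flat {m : ℕ} {n : Fin m → ℕ} (x : JVec m n) : JIdx m n → ℝ :=
  fun p => x p.1 p.2

/-- The block-diagonal part `Q_d` of `Q`: equal to `Q` on entries whose row and column
indices lie in the same agent block, and zero elsewhere. -/
def blockDiagPart {m : ℕ} {n : Fin m → ℕ} (Q : Matrix (JIdx m n) (JIdx m n) ℝ) :
    Matrix (JIdx m n) (JIdx m n) ℝ :=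
  Matrix.of fun p q => if p.1 = q.1 then Q p q else 0

/-- The quadratic objective `f(x) = xᵀ Q x + qᵀ x`. -/
def quadF {m : ℕ} {n : Fin m → ℕ} (Q : Matrix (JIdx m n) (JIdx m n) ℝ)
    (q : JIdx m n → ℝ) (x : JVec m n) : ℝ :=
  flat x ⬝ᵥ (Q *ᵥ flat x) + q ⬝ᵥ flat x

/-- The largest eigenvalue of a real symmetric (Hermitian) matrix. -/
noncomputable def maxEig {ι : Type*} [Fintype ι] [DecidableEq ι]
    {A : Matrix ι ι ℝ} (hA : A.IsHermitian) : ℝ :=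
  ⨆ p, hA.eigenvalues p

/-!
Replacing only the block `zⁱ` moves `x` by `dᵢ`, the vector `d = z − x` cut down to block `i`, and
changes `f` by `2 dᵢᵀQx + dᵢᵀQdᵢ + qᵀdᵢ`. Summed over the agents the off-diagonal blocks of `Q` never
meet in the quadratic terms, so the Jacobi objective is `m f(x) + 2 dᵀQx + qᵀd + dᵀ(Q_d + cI)d`.
Since `(Q_d + cI)(x − ξ(x)) = Qx + q/2`, completing the square around `ξ(x)` turns this into
`‖z − ξ(x)‖²_{Q_d + cI}` plus a constant, and the two objectives have the same minimizers on any set.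
-/

namespace Matrix

variable {ι R : Type*} [Fintype ι] [CommRing R]

lemma IsSymm.dotProduct_mulVec_comm {A : Matrix ι ι R} (hA : A.IsSymm) (u w : ι → R) :
    w ⬝ᵥ (A *ᵥ u) = u ⬝ᵥ (A *ᵥ w) := by
  rw [dotProduct_mulVec, ← mulVec_transpose, hA.eq, dotProduct_comm]

lemma IsSymm.add_dotProduct_mulVec_add {A : Matrix ι ι R} (hA : A.IsSymm) (u w : ι → R) :
    (u + w) ⬝ᵥ (A *ᵥ (u + w)) = u ⬝ᵥ (A *ᵥ u) + 2 * (u ⬝ᵥ (A *ᵥ w)) + w ⬝ᵥ (A *ᵥ w) := by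
  simp only [mulVec_add, dotProduct_add, add_dotProduct, hA.dotProduct_mulVec_comm u w]
  ring

end Matrix

section BlockCalculus

variable {m : ℕ} {n : Fin m → ℕ}

def blockRestrict (i : Fin m) (v : JIdx m n → ℝ) : JIdx m n → ℝ :=
  fun p => if p.1 = i then v p else 0

lemma sum_blockRestrict_dotProduct (v w : JIdx m n → ℝ) :
    ∑ i, blockRestrict i v ⬝ᵥ w = v ⬝ᵥ w := by
  simp only [dotProduct, blockRestrict, ite_mul, zero_mul]
  rw [Finset.sum_comm]
  simp

lemma sum_blockRestrict_dotProduct_mulVec (Q : Matrix (JIdx m n) (JIdx m n) ℝ)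
    (u v : JIdx m n → ℝ) :
    ∑ i, blockRestrict i u ⬝ᵥ (Q *ᵥ blockRestrict i v) = u ⬝ᵥ (blockDiagPart Q *ᵥ v) := by
  simp only [dotProduct, mulVec, blockRestrict, blockDiagPart, of_apply, ite_mul, zero_mul,
    mul_ite, mul_zero, Finset.mul_sum]
  rw [Finset.sum_comm]
  refine Finset.sum_congr rfl fun p _ => ?_
  rw [Finset.sum_comm]
  refine Finset.sum_congr rfl fun r _ => ?_
  by_cases h : p.1 = r.1 <;> simp [h, eq_comm]

lemma flat_upd (x z : JVec m n) (i : Fin m) :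
    flat (upd x i (z i)) = flat x + blockRestrict i (flat z - flat x) := by
  funext ⟨j, k⟩
  by_cases h : j = i
  · subst h
    simp [flat, upd, blockRestrict]
  · simp [flat, upd, blockRestrict, h]

lemma sum_norm_sq_sub_eq (z x : JVec m n) :
    ∑ i, ‖z i - x i‖ ^ 2 = (flat z - flat x) ⬝ᵥ (flat z - flat x) := by
  simp only [EuclideanSpace.norm_eq, Real.sq_sqrt (Finset.sum_nonneg fun _ _ => sq_nonneg _),
    Real.norm_eq_abs, sq_abs, dotProduct, ← Finset.univ_sigma_univ, Finset.sum_sigma]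
  simp [flat, sq]

lemma Matrix.IsSymm.blockDiagPart {Q : Matrix (JIdx m n) (JIdx m n) ℝ} (hQ : Q.IsSymm) :
    (blockDiagPart Q).IsSymm := by
  ext p r
  simp only [transpose_apply, _root_.blockDiagPart, of_apply, eq_comm (a := r.1), hQ.apply]

lemma Matrix.PosSemidef.blockDiagPart {Q : Matrix (JIdx m n) (JIdx m n) ℝ}
    (hQ : Q.PosSemidef) : (blockDiagPart Q).PosSemidef := by
  refine .of_dotProduct_mulVec_nonneg ?_ fun v => ?_
  · exact isHermitian_iff_isSymm.mpr (isHermitian_iff_isSymm.mp hQ.isHermitian).blockDiagPart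
  · simp only [star_trivial, ← sum_blockRestrict_dotProduct_mulVec]
    exact Finset.sum_nonneg fun i _ => by
      simpa using hQ.dotProduct_mulVec_nonneg (blockRestrict i v)

end BlockCalculus

section JacobiObjective

variable {m : ℕ} {n : Fin m → ℕ} {Q : Matrix (JIdx m n) (JIdx m n) ℝ} (q : JIdx m n → ℝ) (c : ℝ)

lemma sum_quadF_upd_add_prox (hQ : Q.IsSymm) (x z : JVec m n) :
    ∑ i, (quadF Q q (upd x i (z i)) + c * ‖z i - x i‖ ^ 2) =
      m * quadF Q q x + (2 * ((flat z - flat x) ⬝ᵥ (Q *ᵥ flat x)) + (flat z - flat x) ⬝ᵥ q +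
        (flat z - flat x) ⬝ᵥ ((blockDiagPart Q + c • 1) *ᵥ (flat z - flat x))) := by
  set d := flat z - flat x with hd
  have hblock : ∀ i, quadF Q q (upd x i (z i)) = quadF Q q x +
      (2 * (blockRestrict i d ⬝ᵥ (Q *ᵥ flat x)) + blockRestrict i d ⬝ᵥ q +
        blockRestrict i d ⬝ᵥ (Q *ᵥ blockRestrict i d)) := by
    intro i
    rw [quadF, quadF, flat_upd, ← hd, hQ.add_dotProduct_mulVec_add, dotProduct_add,
      hQ.dotProduct_mulVec_comm (blockRestrict i d), dotProduct_comm q (blockRestrict i d)]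
    ring
  simp only [hblock, Finset.sum_add_distrib, ← Finset.mul_sum, sum_blockRestrict_dotProduct,
    sum_blockRestrict_dotProduct_mulVec, sum_norm_sq_sub_eq, Finset.sum_const, Finset.card_univ,
    Fintype.card_fin, nsmul_eq_mul, add_mulVec, smul_mulVec, one_mulVec, dotProduct_add,
    dotProduct_smul, smul_eq_mul]
  ring

lemma sum_quadF_upd_add_prox_eq (hQ : Q.IsSymm) {x : JVec m n} {ξ : JIdx m n → ℝ}
    (hA : (blockDiagPart Q + c • 1).IsSymm)
    (hξ : (blockDiagPart Q + c • 1) *ᵥ ξ =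
      c • flat x - (Q - blockDiagPart Q) *ᵥ flat x - (1 / 2 : ℝ) • q) (z : JVec m n) :
    ∑ i, (quadF Q q (upd x i (z i)) + c * ‖z i - x i‖ ^ 2) =
      (flat z - ξ) ⬝ᵥ ((blockDiagPart Q + c • 1) *ᵥ (flat z - ξ)) +
        (m * quadF Q q x - (flat x - ξ) ⬝ᵥ ((blockDiagPart Q + c • 1) *ᵥ (flat x - ξ))) := by
  have hcentre : (blockDiagPart Q + c • 1) *ᵥ (flat x - ξ) = Q *ᵥ flat x + (1 / 2 : ℝ) • q := by
    rw [mulVec_sub, hξ, add_mulVec, smul_mulVec, one_mulVec, sub_mulVec]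
    abel
  rw [sum_quadF_upd_add_prox q c hQ, ← sub_add_sub_cancel (flat z) (flat x) ξ,
    hA.add_dotProduct_mulVec_add, hcentre, dotProduct_add, dotProduct_smul, smul_eq_mul]
  ring

end JacobiObjective

theorem stmt_5_general {m : ℕ} {n : Fin m → ℕ}
    (X : ∀ i : Fin m, Set (EuclideanSpace ℝ (Fin (n i))))
    (Q : Matrix (JIdx m n) (JIdx m n) ℝ) (hQ : Q.PosSemidef)
    (q : JIdx m n → ℝ)
    (c : ℝ) (hc : 0 < c)
    (x : JVec m n) :
    (blockDiagPart Q + c • (1 : Matrix (JIdx m n) (JIdx m n) ℝ)).PosDef ∧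
      ∀ u : JVec m n, (∀ i, u i ∈ X i) →
        ((∀ v : JVec m n, (∀ i, v i ∈ X i) →
            (∑ i : Fin m, (quadF Q q (upd x i (u i)) + c * ‖u i - x i‖ ^ 2)) ≤
              ∑ i : Fin m, (quadF Q q (upd x i (v i)) + c * ‖v i - x i‖ ^ 2)) ↔
          (∀ v : JVec m n, (∀ i, v i ∈ X i) →
            (flat u - (blockDiagPart Q + c • (1 : Matrix (JIdx m n) (JIdx m n) ℝ))⁻¹ *ᵥ
                (c • flat x - (Q - blockDiagPart Q) *ᵥ flat x - (1 / 2 : ℝ) • q)) ⬝ᵥ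
              ((blockDiagPart Q + c • (1 : Matrix (JIdx m n) (JIdx m n) ℝ)) *ᵥ
                (flat u - (blockDiagPart Q + c • (1 : Matrix (JIdx m n) (JIdx m n) ℝ))⁻¹ *ᵥ
                  (c • flat x - (Q - blockDiagPart Q) *ᵥ flat x - (1 / 2 : ℝ) • q))) ≤
            (flat v - (blockDiagPart Q + c • (1 : Matrix (JIdx m n) (JIdx m n) ℝ))⁻¹ *ᵥ
                (c • flat x - (Q - blockDiagPart Q) *ᵥ flat x - (1 / 2 : ℝ) • q)) ⬝ᵥ
              ((blockDiagPart Q + c • (1 : Matrix (JIdx m n) (JIdx m n) ℝ)) *ᵥ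
                (flat v - (blockDiagPart Q + c • (1 : Matrix (JIdx m n) (JIdx m n) ℝ))⁻¹ *ᵥ
                  (c • flat x - (Q - blockDiagPart Q) *ᵥ flat x - (1 / 2 : ℝ) • q))))) := by
  set b := c • flat x - (Q - blockDiagPart Q) *ᵥ flat x - (1 / 2 : ℝ) • q
  have hA : (blockDiagPart Q + c • (1 : Matrix (JIdx m n) (JIdx m n) ℝ)).PosDef :=
    PosDef.posSemidef_add hQ.blockDiagPart (PosDef.one.smul hc)
  refine ⟨hA, fun u _ => ?_⟩
  have hξ : (blockDiagPart Q + c • 1) *ᵥ ((blockDiagPart Q + c • 1)⁻¹ *ᵥ b) = b := by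
    rw [mulVec_mulVec, mul_nonsing_inv _ ((isUnit_iff_isUnit_det _).mp hA.isUnit), one_mulVec]
  simp only [sum_quadF_upd_add_prox_eq q c (isHermitian_iff_isSymm.mp hQ.isHermitian)
    (isHermitian_iff_isSymm.mp hA.isHermitian) hξ, add_le_add_iff_right]

/-- For `c > 0` the matrix `Q_d + cI` is positive definite, and with
`ξ(x) = (Q_d + cI)⁻¹(cx − Q_z x − q/2)`, a point `u ∈ X` minimizes the regularized Jacobi
objective `z ↦ Σᵢ [f(zⁱ, x^{-i}) + c‖zⁱ − xⁱ‖²]` over `X` iff it minimizes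
`z ↦ (z − ξ(x))ᵀ(Q_d + cI)(z − ξ(x))` over `X`, i.e. the update is the projection of
`ξ(x)` onto `X` in the `‖·‖_{Q_d + cI}` norm. -/
theorem stmt_5 {m : ℕ} {n : Fin m → ℕ}
    (X : ∀ i : Fin m, Set (EuclideanSpace ℝ (Fin (n i))))
    (hXne : ∀ i, (X i).Nonempty)
    (hXcpt : ∀ i, IsCompact (X i))
    (hXcvx : ∀ i, Convex ℝ (X i))
    (Q : Matrix (JIdx m n) (JIdx m n) ℝ) (hQ : Q.PosSemidef)
    (q : JIdx m n → ℝ)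
    (c : ℝ) (hc : 0 < c)
    (x : JVec m n) (hx : ∀ i, x i ∈ X i) :
    (blockDiagPart Q + c • (1 : Matrix (JIdx m n) (JIdx m n) ℝ)).PosDef ∧
      ∀ u : JVec m n, (∀ i, u i ∈ X i) →
        ((∀ v : JVec m n, (∀ i, v i ∈ X i) →
            (∑ i : Fin m, (quadF Q q (upd x i (u i)) + c * ‖u i - x i‖ ^ 2)) ≤
              ∑ i : Fin m, (quadF Q q (upd x i (v i)) + c * ‖v i - x i‖ ^ 2)) ↔
          (∀ v : JVec m n, (∀ i, v i ∈ X i) →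
            (flat u - (blockDiagPart Q + c • (1 : Matrix (JIdx m n) (JIdx m n) ℝ))⁻¹ *ᵥ
                (c • flat x - (Q - blockDiagPart Q) *ᵥ flat x - (1 / 2 : ℝ) • q)) ⬝ᵥ
              ((blockDiagPart Q + c • (1 : Matrix (JIdx m n) (JIdx m n) ℝ)) *ᵥ
                (flat u - (blockDiagPart Q + c • (1 : Matrix (JIdx m n) (JIdx m n) ℝ))⁻¹ *ᵥ
                  (c • flat x - (Q - blockDiagPart Q) *ᵥ flat x - (1 / 2 : ℝ) • q))) ≤
            (flat v - (blockDiagPart Q + c • (1 : Matrix (JIdx m n) (JIdx m n) ℝ))⁻¹ *ᵥ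
                (c • flat x - (Q - blockDiagPart Q) *ᵥ flat x - (1 / 2 : ℝ) • q)) ⬝ᵥ
              ((blockDiagPart Q + c • (1 : Matrix (JIdx m n) (JIdx m n) ℝ)) *ᵥ
                (flat v - (blockDiagPart Q + c • (1 : Matrix (JIdx m n) (JIdx m n) ℝ))⁻¹ *ᵥ
                  (c • flat x - (Q - blockDiagPart Q) *ᵥ flat x - (1 / 2 : ℝ) • q))))) :=
  stmt_5_general X Q hQ q c hc x
end
end

section
/- If c > ((m−1)/(2m−1)) · √m · L, then the sequence (x_k) generated by the regularized Jacobi iteration satisfies dist(x_k, X*) → 0 as k → ∞, where X* is the (nonempty) set of minimizers of f over X. -/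
/-!
The regularized Jacobi iteration is a sufficient-descent method. Strong convexity of each
regularized block problem gives `f(x_{k+1}^i, x_k^{-i}) ≤ f(x_k) - 2c‖x_{k+1}^i - x_k^i‖²`. The
gradient inequality for `f` at `x_{k+1}`, summed over the `m` blocks and combined with the
Lipschitz bound on `∇f`, turns this into
`m f(x_{k+1}) + (2cm - (m - 1)L)‖x_{k+1} - x_k‖² ≤ m f(x_k)`,
and the coefficient is positive under the bound on `c`. Hence `x_{k+1} - x_k → 0`, so every
cluster point of the (compact) orbit is a fixed point of the Jacobi map, and first-order
optimality in each block together with convexity of `f` makes such a point a minimizer of `f`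
on `X`.
-/

open Matrix Filter Topology
open scoped RealInnerProductSpace

noncomputable section

open Set InnerProductSpace

section FirstOrder

variable {F : Type*} [NormedAddCommGroup F] [InnerProductSpace ℝ F]

theorem norm_one_sub_smul_add_smul_sq (u v : F) (t : ℝ) :
    ‖(1 - t) • u + t • v‖ ^ 2
      = (1 - t) * ‖u‖ ^ 2 + t * ‖v‖ ^ 2 - t * (1 - t) * ‖u - v‖ ^ 2 := by
  simp only [← real_inner_self_eq_norm_sq, inner_add_add_self, inner_sub_sub_self,
    real_inner_smul_left, real_inner_smul_right]
  ring

theorem le_of_forall_Ioc_le_add_mul {a b d : ℝ} (h : ∀ t ∈ Ioc (0 : ℝ) 1, a ≤ b + t * d) :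
    a ≤ b := by
  have hlim : Tendsto (fun t : ℝ => b + t * d) (𝓝[>] 0) (𝓝 b) := by
    have : Tendsto (fun t : ℝ => b + t * d) (𝓝 0) (𝓝 (b + 0 * d)) :=
      Continuous.tendsto (by fun_prop) _
    simpa using this.mono_left nhdsWithin_le_nhds
  refine ge_of_tendsto hlim ?_
  filter_upwards [Ioc_mem_nhdsGT zero_lt_one] with t ht using h t ht

-- The three-point inequality of proximal methods: the extra `c‖z - y‖²` comes from the
-- strong convexity of `c‖· - a‖²`.
theorem ConvexOn.add_sq_norm_sub_le_of_isMinOn {s : Set F} {g : F → ℝ} (hg : ConvexOn ℝ s g)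
    (c : ℝ) {a y z : F} (hmin : IsMinOn (fun w => g w + c * ‖w - a‖ ^ 2) s y) (hy : y ∈ s)
    (hz : z ∈ s) :
    g y + c * ‖y - a‖ ^ 2 + c * ‖z - y‖ ^ 2 ≤ g z + c * ‖z - a‖ ^ 2 := by
  refine le_of_forall_Ioc_le_add_mul (d := c * ‖z - y‖ ^ 2) fun t ht => ?_
  have hw : (1 - t) • y + t • z ∈ s := hg.1 hy hz (by linarith [ht.2]) ht.1.le (by ring)
  have hconv : g ((1 - t) • y + t • z) ≤ (1 - t) * g y + t * g z :=
    hg.2 hy hz (by linarith [ht.2]) ht.1.le (by ring)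
  have hnorm : ‖(1 - t) • y + t • z - a‖ ^ 2
      = (1 - t) * ‖y - a‖ ^ 2 + t * ‖z - a‖ ^ 2 - t * (1 - t) * ‖z - y‖ ^ 2 := by
    rw [show (1 - t) • y + t • z - a = (1 - t) • (y - a) + t • (z - a) by module,
      norm_one_sub_smul_add_smul_sq, norm_sub_rev (y - a), sub_sub_sub_cancel_right]
  have hle := isMinOn_iff.1 hmin _ hw
  simp only [hnorm] at hle
  have : t * (g y + c * ‖y - a‖ ^ 2 + c * ‖z - y‖ ^ 2)
      ≤ t * (g z + c * ‖z - a‖ ^ 2 + t * (c * ‖z - y‖ ^ 2)) := by nlinarith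
  exact le_of_mul_le_mul_left this ht.1

theorem HasDerivAt.nonneg_of_le_add_mul_sq {ψ : ℝ → ℝ} {d C : ℝ} (h : HasDerivAt ψ d 0)
    (hle : ∀ t ∈ Ioc (0 : ℝ) 1, ψ 0 ≤ ψ t + C * t ^ 2) : 0 ≤ d := by
  have hlim : Tendsto (fun t : ℝ => -(C * t)) (𝓝[>] 0) (𝓝 0) := by
    have : Tendsto (fun t : ℝ => -(C * t)) (𝓝 0) (𝓝 (-(C * 0))) :=
      Continuous.tendsto (by fun_prop) _
    simpa using this.mono_left nhdsWithin_le_nhds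
  refine le_of_tendsto_of_tendsto hlim h.tendsto_slope_zero_right ?_
  filter_upwards [Ioc_mem_nhdsGT zero_lt_one] with t ht
  rw [zero_add, smul_eq_mul, ← div_eq_inv_mul, le_div_iff₀ ht.1]
  nlinarith [hle t ht]

variable [CompleteSpace F] {f : F → ℝ} {f' x : F}

theorem HasGradientAt.hasDerivAt_comp_lineMap (h : HasGradientAt f f' x) (y : F) :
    HasDerivAt (f ∘ AffineMap.lineMap (k := ℝ) x y) ⟪f', y - x⟫ 0 := by
  have hf : HasFDerivAt f (toDual ℝ F f') (AffineMap.lineMap x y (0 : ℝ)) := by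
    simpa using h.hasFDerivAt
  simpa using hf.comp_hasDerivAt (0 : ℝ) AffineMap.hasDerivAt_lineMap

theorem ConvexOn.add_inner_le_of_hasGradientAt (hf : ConvexOn ℝ univ f)
    (h : HasGradientAt f f' x) (y : F) : f x + ⟪f', y - x⟫ ≤ f y := by
  have hψ : ConvexOn ℝ univ (f ∘ AffineMap.lineMap (k := ℝ) x y) := hf.comp_affineMap _
  have := hψ.le_slope_of_hasDerivAt (mem_univ 0) (mem_univ 1) zero_lt_one
    (h.hasDerivAt_comp_lineMap y)
  simp only [slope_def_field, Function.comp_apply, AffineMap.lineMap_apply_one,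
    AffineMap.lineMap_apply_zero, sub_zero, div_one] at this
  linarith

end FirstOrder

section Blocks

variable {m : ℕ} {n : Fin m → ℕ}

theorem upd_self (x : JVec m n) (i : Fin m) : upd x i (x i) = x :=
  congrArg (WithLp.toLp 2) (Function.update_eq_self i x.ofLp)

theorem upd_sub_self (x : JVec m n) (i : Fin m) (z : EuclideanSpace ℝ (Fin (n i))) :
    upd x i z - x = PiLp.single 2 i (z - x i) := by
  ext j : 1
  rcases eq_or_ne j i with rfl | hj
  · simp [upd]
  · simp [upd, Function.update_of_ne hj, PiLp.single_eq_of_ne 2 hj]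

theorem upd_combo (x : JVec m n) (i : Fin m) (a b : EuclideanSpace ℝ (Fin (n i)))
    {α β : ℝ} (h : α + β = 1) : upd x i (α • a + β • b) = α • upd x i a + β • upd x i b := by
  ext j : 1
  rcases eq_or_ne j i with rfl | hj
  · simp [upd]
  · simp [upd, Function.update_of_ne hj, Convex.combo_self h]

theorem upd_lineMap (x : JVec m n) (i : Fin m) (a b : EuclideanSpace ℝ (Fin (n i))) (t : ℝ) :
    upd x i (AffineMap.lineMap a b t) = AffineMap.lineMap (upd x i a) (upd x i b) t := by
  simp only [AffineMap.lineMap_apply_module]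
  exact upd_combo x i a b (sub_add_cancel 1 t)

theorem inner_upd_sub_self (g x : JVec m n) (i : Fin m) (z : EuclideanSpace ℝ (Fin (n i))) :
    ⟪g, upd x i z - x⟫ = ⟪g i, z - x i⟫ := by
  rw [upd_sub_self, PiLp.inner_apply, Finset.sum_eq_single i]
  · rw [PiLp.single_eq_same]
  · intro j _ hj
    rw [PiLp.single_eq_of_ne 2 hj, inner_zero_right]
  · simp

theorem continuous_upd (i : Fin m) :
    Continuous fun p : JVec m n × EuclideanSpace ℝ (Fin (n i)) => upd p.1 i p.2 :=
  (PiLp.continuous_toLp 2 _).comp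
    (((PiLp.continuous_ofLp 2 _).comp continuous_fst).update i continuous_snd)

theorem isCompact_setOf_forall_apply_mem {X : ∀ i : Fin m, Set (EuclideanSpace ℝ (Fin (n i)))}
    (hX : ∀ i, IsCompact (X i)) : IsCompact {y : JVec m n | ∀ i, y i ∈ X i} := by
  have h := (PiLp.homeomorph 2 _).isCompact_preimage.2 (isCompact_univ_pi hX)
  simp only [Set.preimage, Set.mem_univ_pi] at h
  exact h

theorem ConvexOn.comp_upd {f : JVec m n → ℝ} (hf : ConvexOn ℝ univ f) (x : JVec m n)
    (i : Fin m) {s : Set (EuclideanSpace ℝ (Fin (n i)))} (hs : Convex ℝ s) :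
    ConvexOn ℝ s fun z => f (upd x i z) :=
  ⟨hs, fun a _ b _ α β hα hβ hαβ => by
    simpa only [upd_combo x i a b hαβ, smul_eq_mul] using
      hf.2 (mem_univ _) (mem_univ _) hα hβ hαβ⟩

end Blocks

section Jacobi

variable {m : ℕ} {n : Fin m → ℕ}

def IsRegularizedJacobiStep (f : JVec m n → ℝ)
    (X : ∀ i : Fin m, Set (EuclideanSpace ℝ (Fin (n i)))) (c : ℝ) (x y : JVec m n) : Prop :=
  ∀ i, y i ∈ X i ∧ IsMinOn (fun z => f (upd x i z) + c * ‖z - x i‖ ^ 2) (X i) (y i)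

variable {f : JVec m n → ℝ} {X : ∀ i : Fin m, Set (EuclideanSpace ℝ (Fin (n i)))} {c : ℝ}

theorem norm_sub_sq_eq_sum (x y : JVec m n) : ‖y - x‖ ^ 2 = ∑ i, ‖y i - x i‖ ^ 2 :=
  PiLp.norm_sq_eq_of_L2 _ (y - x)

theorem inner_sub_eq_sum (g x y : JVec m n) : ⟪g, y - x⟫ = ∑ i, ⟪g i, y i - x i⟫ :=
  PiLp.inner_apply _ _

theorem mul_le_sum_upd_add_inner (hfc : ConvexOn ℝ univ f) (hf : Differentiable ℝ f)
    (x y : JVec m n) :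
    m * f y ≤ ∑ i, f (upd x i (y i)) + (m - 1) * ⟪gradient f y, y - x⟫ := by
  have hblock : ∀ i, f y ≤ f (upd x i (y i)) + ⟪gradient f y, y - x⟫
      - ⟪gradient f y i, y i - x i⟫ := by
    intro i
    have h := hfc.add_inner_le_of_hasGradientAt (hf y).hasGradientAt (upd x i (y i))
    rw [show upd x i (y i) - y = (upd x i (y i) - x) - (y - x) by abel, inner_sub_right,
      inner_upd_sub_self] at h
    linarith
  calc (m : ℝ) * f y = ∑ _i : Fin m, f y := by
        rw [Finset.sum_const, Finset.card_univ, Fintype.card_fin, nsmul_eq_mul]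
    _ ≤ ∑ i, (f (upd x i (y i)) + ⟪gradient f y, y - x⟫ - ⟪gradient f y i, y i - x i⟫) :=
      Finset.sum_le_sum fun i _ => hblock i
    _ = ∑ i, f (upd x i (y i)) + (m - 1) * ⟪gradient f y, y - x⟫ := by
      rw [Finset.sum_sub_distrib, Finset.sum_add_distrib, ← inner_sub_eq_sum, Finset.sum_const,
        Finset.card_univ, Fintype.card_fin, nsmul_eq_mul]
      ring

namespace IsRegularizedJacobiStep

variable {x y : JVec m n}

theorem apply_upd_le (hfc : ConvexOn ℝ univ f) (hX : ∀ i, Convex ℝ (X i))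
    (hstep : IsRegularizedJacobiStep f X c x y) (hx : ∀ i, x i ∈ X i) (i : Fin m) :
    f (upd x i (y i)) ≤ f x - 2 * c * ‖y i - x i‖ ^ 2 := by
  have h := (hfc.comp_upd x i (hX i)).add_sq_norm_sub_le_of_isMinOn c (hstep i).2 (hstep i).1
    (hx i)
  rw [sub_self, norm_zero, norm_sub_rev (x i), upd_self] at h
  linarith

theorem inner_gradient_le (hfc : ConvexOn ℝ univ f) (hf : Differentiable ℝ f)
    (hX : ∀ i, Convex ℝ (X i)) (hstep : IsRegularizedJacobiStep f X c x y)
    (hx : ∀ i, x i ∈ X i) :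
    ⟪gradient f x, y - x⟫ ≤ -(2 * c) * ‖y - x‖ ^ 2 := by
  have hblock : ∀ i, ⟪gradient f x i, y i - x i⟫ ≤ -(2 * c) * ‖y i - x i‖ ^ 2 := by
    intro i
    have h := hfc.add_inner_le_of_hasGradientAt (hf x).hasGradientAt (upd x i (y i))
    rw [inner_upd_sub_self] at h
    linarith [hstep.apply_upd_le hfc hX hx i]
  rw [inner_sub_eq_sum, norm_sub_sq_eq_sum, Finset.mul_sum]
  exact Finset.sum_le_sum fun i _ => hblock i

theorem descent (hm : 0 < m) (hfc : ConvexOn ℝ univ f) (hf : Differentiable ℝ f)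
    (hX : ∀ i, Convex ℝ (X i)) (hstep : IsRegularizedJacobiStep f X c x y)
    (hx : ∀ i, x i ∈ X i) {L : ℝ} (hLip : ‖gradient f y - gradient f x‖ ≤ L * ‖y - x‖) :
    m * f y + (2 * c * m - (m - 1) * L) * ‖y - x‖ ^ 2 ≤ m * f x := by
  have hsum : ∑ i, f (upd x i (y i)) ≤ m * f x - 2 * c * ‖y - x‖ ^ 2 := by
    calc ∑ i, f (upd x i (y i)) ≤ ∑ i, (f x - 2 * c * ‖y i - x i‖ ^ 2) :=
          Finset.sum_le_sum fun i _ => hstep.apply_upd_le hfc hX hx i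
      _ = m * f x - 2 * c * ‖y - x‖ ^ 2 := by
          rw [norm_sub_sq_eq_sum, Finset.sum_sub_distrib, Finset.mul_sum, Finset.sum_const,
            Finset.card_univ, Fintype.card_fin, nsmul_eq_mul]
  have hinner : ⟪gradient f y, y - x⟫ ≤ (L - 2 * c) * ‖y - x‖ ^ 2 := by
    have hdiff : ⟪gradient f y - gradient f x, y - x⟫ ≤ L * ‖y - x‖ ^ 2 := by
      calc _ ≤ ‖gradient f y - gradient f x‖ * ‖y - x‖ := real_inner_le_norm _ _
        _ ≤ L * ‖y - x‖ * ‖y - x‖ := by gcongr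
        _ = L * ‖y - x‖ ^ 2 := by ring
    rw [inner_sub_left] at hdiff
    linarith [hstep.inner_gradient_le hfc hf hX hx]
  have hm1 : (0 : ℝ) ≤ m - 1 := by
    have : (1 : ℝ) ≤ m := by exact_mod_cast hm
    linarith
  nlinarith [mul_le_sum_upd_add_inner hfc hf x y, mul_le_mul_of_nonneg_left hinner hm1]

end IsRegularizedJacobiStep

end Jacobi

section Convergence

theorem tendsto_zero_of_add_mul_sq_norm_le {E : Type*} [SeminormedAddCommGroup E] {a : ℕ → ℝ}
    {u : ℕ → E} {ρ : ℝ} (hρ : 0 < ρ) (ha : BddBelow (range a))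
    (h : ∀ k, a (k + 1) + ρ * ‖u k‖ ^ 2 ≤ a k) : Tendsto u atTop (𝓝 0) := by
  have hanti : Antitone a :=
    antitone_nat_of_succ_le fun k => by nlinarith [h k, mul_nonneg hρ.le (sq_nonneg ‖u k‖)]
  have hlim := tendsto_atTop_ciInf hanti ha
  have hgap : Tendsto (fun k => ρ⁻¹ * (a k - a (k + 1))) atTop (𝓝 0) := by
    simpa using (hlim.sub (hlim.comp (tendsto_add_atTop_nat 1))).const_mul ρ⁻¹
  have hsq : Tendsto (fun k => ‖u k‖ ^ 2) atTop (𝓝 0) :=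
    squeeze_zero (fun k => by positivity)
      (fun k => by rw [le_inv_mul_iff₀ hρ]; linarith [h k]) hgap
  rw [tendsto_zero_iff_norm_tendsto_zero]
  simpa using hsq.sqrt

theorem tendsto_infDist_of_forall_tendsto_subseq {α : Type*} [PseudoMetricSpace α]
    {K S : Set α} {x : ℕ → α} (hK : IsCompact K) (hx : ∀ k, x k ∈ K)
    (hS : ∀ φ : ℕ → ℕ, Tendsto φ atTop atTop → ∀ a, Tendsto (x ∘ φ) atTop (𝓝 a) → a ∈ S) :
    Tendsto (fun k => Metric.infDist (x k) S) atTop (𝓝 0) := by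
  refine tendsto_of_subseq_tendsto fun φ hφ => ?_
  obtain ⟨a, -, ψ, hψ, ha⟩ := hK.tendsto_subseq fun j => hx (φ j)
  refine ⟨ψ, ?_⟩
  have hdist := ((Metric.continuous_infDist_pt S).tendsto a).comp ha
  rwa [Metric.infDist_zero_of_mem (hS _ (hφ.comp hψ.tendsto_atTop) a ha)] at hdist

variable {m : ℕ} {n : Fin m → ℕ} {f : JVec m n → ℝ}
  {X : ∀ i : Fin m, Set (EuclideanSpace ℝ (Fin (n i)))} {c : ℝ}

theorem IsRegularizedJacobiStep.le_upd_of_tendsto (hf : Continuous f) {u v : ℕ → JVec m n}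
    {x : JVec m n} (hstep : ∀ j, IsRegularizedJacobiStep f X c (u j) (v j))
    (hu : Tendsto u atTop (𝓝 x)) (hv : Tendsto v atTop (𝓝 x)) (i : Fin m) {z}
    (hz : z ∈ X i) : f x ≤ f (upd x i z) + c * ‖z - x i‖ ^ 2 := by
  have hcoord : ∀ {w : ℕ → JVec m n}, Tendsto w atTop (𝓝 x) →
      Tendsto (fun j => w j i) atTop (𝓝 (x i)) :=
    fun hw => ((PiLp.continuous_apply 2 _ i).tendsto x).comp hw
  have hobj : ∀ {a : ℕ → EuclideanSpace ℝ (Fin (n i))} {b}, Tendsto a atTop (𝓝 b) →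
      Tendsto (fun j => f (upd (u j) i (a j)) + c * ‖a j - u j i‖ ^ 2) atTop
        (𝓝 (f (upd x i b) + c * ‖b - x i‖ ^ 2)) := fun ha =>
    (((hf.comp (continuous_upd i)).tendsto _).comp (hu.prodMk_nhds ha)).add
      (((ha.sub (hcoord hu)).norm.pow 2).const_mul c)
  have hlhs := hobj (hcoord hv)
  rw [upd_self, sub_self, norm_zero] at hlhs
  exact le_of_tendsto_of_tendsto (by simpa using hlhs) (hobj tendsto_const_nhds)
    (Eventually.of_forall fun j => (hstep j i).2 hz)

theorem isMinOn_of_forall_le_upd (hfc : ConvexOn ℝ univ f) (hf : Differentiable ℝ f)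
    (hX : ∀ i, Convex ℝ (X i)) {x : JVec m n} (hx : ∀ i, x i ∈ X i)
    (hfix : ∀ i, ∀ z ∈ X i, f x ≤ f (upd x i z) + c * ‖z - x i‖ ^ 2) :
    IsMinOn f {y | ∀ i, y i ∈ X i} x := by
  -- Moving block `i` a step `t` towards `z` costs only `O(t²)` in the regularizer, so the
  -- directional derivative of `f` in that direction cannot be negative.
  have hblock : ∀ i, ∀ z ∈ X i, 0 ≤ ⟪gradient f x i, z - x i⟫ := by
    intro i z hz
    rw [← inner_upd_sub_self (gradient f x) x i z]
    refine ((hf x).hasGradientAt.hasDerivAt_comp_lineMap _).nonneg_of_le_add_mul_sq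
      (C := c * ‖z - x i‖ ^ 2) fun t ht => ?_
    have h := hfix i _ ((hX i).lineMap_mem (hx i) hz (Ioc_subset_Icc_self ht))
    rw [upd_lineMap, upd_self, ← vsub_eq_sub, AffineMap.lineMap_vsub_left, norm_smul,
      Real.norm_of_nonneg ht.1.le, vsub_eq_sub] at h
    simp only [Function.comp_apply, AffineMap.lineMap_apply_zero]
    linarith
  refine isMinOn_iff.2 fun w hw => ?_
  have h := hfc.add_inner_le_of_hasGradientAt (hf x).hasGradientAt w
  rw [inner_sub_eq_sum] at h
  linarith [Finset.sum_nonneg (s := Finset.univ) fun i _ => hblock i (w i) (hw i)]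

end Convergence

theorem jacobi_descent_coeff_pos {m : ℕ} (hm : 0 < m) {L c : ℝ} (hL : 0 ≤ L)
    (hc : ((m : ℝ) - 1) / (2 * m - 1) * (Real.sqrt m * L) < c) :
    0 < 2 * c * m - (m - 1) * L := by
  have hm1 : (1 : ℝ) ≤ m := by exact_mod_cast hm
  have hsqrt : 1 ≤ Real.sqrt m := Real.one_le_sqrt.2 hm1
  rw [div_mul_eq_mul_div, div_lt_iff₀ (by linarith)] at hc
  nlinarith [mul_nonneg (mul_nonneg (sub_nonneg.2 hm1) hL) (sub_nonneg.2 hsqrt)]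

/-- Theorem 2: if `c > ((m−1)/(2m−1))·√m·L`, the regularized Jacobi iterates satisfy
`dist(x_k, X*) → 0`, where `X*` is the (nonempty) set of minimizers of `f` over `X`. -/
theorem stmt_11 {m : ℕ} {n : Fin m → ℕ} (hm : 0 < m)
    (X : ∀ i : Fin m, Set (EuclideanSpace ℝ (Fin (n i))))
    (hXne : ∀ i, (X i).Nonempty)
    (hXcpt : ∀ i, IsCompact (X i))
    (hXcvx : ∀ i, Convex ℝ (X i))
    (f : JVec m n → ℝ)
    (hf : ContDiff ℝ 1 f)
    (hfc : ConvexOn ℝ Set.univ f)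
    (L : ℝ) (hL : 0 < L)
    (hLip : ∀ a b : JVec m n, (∀ i, a i ∈ X i) → (∀ i, b i ∈ X i) →
      ‖gradient f a - gradient f b‖ ≤ L * ‖a - b‖)
    (c : ℝ) (hc : ((m : ℝ) - 1) / (2 * m - 1) * (Real.sqrt m * L) < c)
    (x : ℕ → JVec m n) (hx0 : ∀ i, x 0 i ∈ X i)
    (hrec : ∀ k : ℕ, ∀ i : Fin m, x (k + 1) i ∈ X i ∧
      ∀ z ∈ X i,
        f (upd (x k) i (x (k + 1) i)) + c * ‖x (k + 1) i - x k i‖ ^ 2 ≤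
          f (upd (x k) i z) + c * ‖z - x k i‖ ^ 2) :
    ({y : JVec m n | (∀ i, y i ∈ X i) ∧
        ∀ w : JVec m n, (∀ i, w i ∈ X i) → f y ≤ f w}).Nonempty ∧
      Tendsto (fun k : ℕ => Metric.infDist (x k)
        {y : JVec m n | (∀ i, y i ∈ X i) ∧
          ∀ w : JVec m n, (∀ i, w i ∈ X i) → f y ≤ f w}) atTop (𝓝 0) := by
  have hXc : IsCompact {y : JVec m n | ∀ i, y i ∈ X i} := isCompact_setOf_forall_apply_mem hXcpt
  have hfd : Differentiable ℝ f := hf.differentiable one_ne_zero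
  have hxX : ∀ k i, x k i ∈ X i
    | 0 => hx0
    | k + 1 => fun i => (hrec k i).1
  have hstep : ∀ k, IsRegularizedJacobiStep f X c (x k) (x (k + 1)) := fun k i => hrec k i
  obtain ⟨y₀, hy₀, hmin⟩ := hXc.exists_isMinOn
    ⟨WithLp.toLp 2 fun i => (hXne i).some, fun i => (hXne i).some_mem⟩
    hf.continuous.continuousOn
  have hgap : Tendsto (fun k => x (k + 1) - x k) atTop (𝓝 0) :=
    tendsto_zero_of_add_mul_sq_norm_le (a := fun k => m * f (x k))
      (jacobi_descent_coeff_pos hm hL.le hc)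
      ⟨m * f y₀, forall_mem_range.2 fun k =>
        mul_le_mul_of_nonneg_left (hmin (hxX k)) m.cast_nonneg⟩
      fun k => (hstep k).descent hm hfc hfd hXcvx (hxX k) (hLip _ _ (hxX (k + 1)) (hxX k))
  refine ⟨⟨y₀, hy₀, hmin⟩, tendsto_infDist_of_forall_tendsto_subseq hXc hxX fun φ hφ a ha => ?_⟩
  have ha' : Tendsto (fun j => x (φ j + 1)) atTop (𝓝 a) := by
    simpa using ha.add (hgap.comp hφ)
  have haX : ∀ i, a i ∈ X i :=
    hXc.isClosed.mem_of_tendsto ha (Eventually.of_forall fun j => hxX (φ j))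
  exact ⟨haX, isMinOn_of_forall_le_upd hfc hfd hXcvx haX fun i z hz =>
    IsRegularizedJacobiStep.le_upd_of_tendsto hf.continuous (fun j => hstep (φ j)) ha ha' i hz⟩
end
end

section
/- Let c > 0, x ∈ X, and for each i = 1,…,m let u^i ∈ X^i minimize z^i ↦ f(z^i, x^{-i}) + c‖z^i − x^i‖² over X^i; set u = (u^1,…,u^m). Then m · f(u) ≤ m · f(x) − c‖u − x‖² + (m−1)(u − x)ᵀ∇f(u). -/
open Matrix Filter Topology
open scoped RealInnerProductSpace

noncomputable section

/-! Each best response `uⁱ` beats the choice `zⁱ = xⁱ`, so `f(uⁱ, x^{-i}) + c‖uⁱ - xⁱ‖² ≤ f(x)`.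
By convexity, `f(uⁱ, x^{-i}) ≥ f(u) + ⟪∇f(u), (uⁱ, x^{-i}) - u⟫`, and the displacements
`(uⁱ, x^{-i}) - u` sum to `(m - 1)(x - u)`, since every block of `x - u` is missed by exactly one
agent. Summing both inequalities over `i` and using `‖u - x‖² = ∑ ‖uⁱ - xⁱ‖²` gives the claim. -/

theorem ConvexOn.add_apply_sub_le_of_hasFDerivAt {E : Type*} [NormedAddCommGroup E]
    [NormedSpace ℝ E] {s : Set E} {f : E → ℝ} {f' : E →L[ℝ] ℝ} {x y : E}
    (hfc : ConvexOn ℝ s f) (hx : x ∈ s) (hy : y ∈ s) (hf : HasFDerivAt f f' x) :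
    f x + f' (y - x) ≤ f y := by
  set γ : ℝ →ᵃ[ℝ] E := AffineMap.lineMap x y
  have hγ0 : γ 0 = x := AffineMap.lineMap_apply_zero x y
  have hγ1 : γ 1 = y := AffineMap.lineMap_apply_one x y
  have hline : ConvexOn ℝ (γ ⁻¹' s) (f ∘ γ) := hfc.comp_affineMap γ
  have hderiv : HasDerivAt (f ∘ γ) (f' (y - x)) 0 :=
    (hγ0 ▸ hf).comp_hasDerivAt 0 AffineMap.hasDerivAt_lineMap
  have hslope := hline.le_slope_of_hasDerivAt (by simpa [hγ0]) (by simpa [hγ1]) one_pos hderiv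
  simp only [slope, Function.comp, hγ0, hγ1, vsub_eq_sub, sub_zero, inv_one, one_smul] at hslope
  linarith

theorem ConvexOn.add_inner_sub_le_of_hasGradientAt {F : Type*} [NormedAddCommGroup F]
    [InnerProductSpace ℝ F] [CompleteSpace F] {s : Set F} {f : F → ℝ} {f' x y : F}
    (hfc : ConvexOn ℝ s f) (hx : x ∈ s) (hy : y ∈ s) (hf : HasGradientAt f f' x) :
    f x + ⟪f', y - x⟫ ≤ f y := by
  simpa using hfc.add_apply_sub_le_of_hasFDerivAt hx hy hf.hasFDerivAt

theorem Finset.univ_sum_update {ι : Type*} [Fintype ι] [DecidableEq ι] {π : ι → Type*}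
    [∀ i, AddCommGroup (π i)] (x u : ∀ i, π i) :
    ∑ i, Function.update x i (u i) = Fintype.card ι • x + (u - x) := by
  simp only [Pi.update_eq_sub_add_single, Finset.sum_add_distrib, Finset.sum_sub_distrib,
    Finset.univ_sum_single, Finset.sum_const, Finset.card_univ]
  abel

theorem sum_upd_sub {m : ℕ} {n : Fin m → ℕ} (x u : JVec m n) :
    ∑ i, (upd x i (u i) - u) = ((m : ℝ) - 1) • (x - u) := by
  have hsum : ∑ i, upd x i (u i) = m • x + (u - x) := by
    simpa [upd, ← WithLp.toLp_sum] using
      congrArg (WithLp.toLp 2) (Finset.univ_sum_update x.ofLp u.ofLp)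
  rw [Finset.sum_sub_distrib, hsum, Finset.sum_const, Finset.card_univ, Fintype.card_fin]
  simp only [← Nat.cast_smul_eq_nsmul ℝ]
  module

theorem stmt_16_general {m : ℕ} {n : Fin m → ℕ}
    (X : ∀ i : Fin m, Set (EuclideanSpace ℝ (Fin (n i))))
    (f : JVec m n → ℝ)
    (hf : ContDiff ℝ 1 f)
    (hfc : ConvexOn ℝ Set.univ f)
    (c : ℝ)
    (x : JVec m n) (hx : ∀ i, x i ∈ X i)
    (u : JVec m n)
    (hu : ∀ i : Fin m, ∀ z ∈ X i,
      f (upd x i (u i)) + c * ‖u i - x i‖ ^ 2 ≤ f (upd x i z) + c * ‖z - x i‖ ^ 2) :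
    (m : ℝ) * f u ≤ m * f x - c * ‖u - x‖ ^ 2
      + ((m : ℝ) - 1) * ⟪u - x, gradient f u⟫ := by
  have hprox : ∀ i, f (upd x i (u i)) + c * ‖u i - x i‖ ^ 2 ≤ f x := fun i => by
    simpa [upd] using hu i (x i) (hx i)
  have htangent : ∀ i, f u + ⟪gradient f u, upd x i (u i) - u⟫ ≤ f (upd x i (u i)) := fun i =>
    hfc.add_inner_sub_le_of_hasGradientAt trivial trivial
      ((hf.differentiable one_ne_zero) u).hasGradientAt
  have hprox_sum := Finset.sum_le_sum fun i (_ : i ∈ Finset.univ) => hprox i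
  have htangent_sum := Finset.sum_le_sum fun i (_ : i ∈ Finset.univ) => htangent i
  simp only [Finset.sum_add_distrib, ← Finset.mul_sum, Finset.sum_const, Finset.card_univ,
    Fintype.card_fin, nsmul_eq_mul] at hprox_sum htangent_sum
  rw [← inner_sum, sum_upd_sub, real_inner_smul_right, ← neg_sub u x, inner_neg_right,
    real_inner_comm] at htangent_sum
  rw [PiLp.norm_sq_eq_of_L2]
  simp only [PiLp.sub_apply]
  linarith

/-- If each `uⁱ ∈ Xⁱ` minimizes `zⁱ ↦ f(zⁱ, x^{-i}) + c‖zⁱ − xⁱ‖²` over `Xⁱ`, then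
`m f(u) ≤ m f(x) − c‖u − x‖² + (m−1)(u − x)ᵀ∇f(u)`. -/
theorem stmt_16 {m : ℕ} {n : Fin m → ℕ}
    (X : ∀ i : Fin m, Set (EuclideanSpace ℝ (Fin (n i))))
    (hXne : ∀ i, (X i).Nonempty)
    (hXcpt : ∀ i, IsCompact (X i))
    (hXcvx : ∀ i, Convex ℝ (X i))
    (f : JVec m n → ℝ)
    (hf : ContDiff ℝ 1 f)
    (hfc : ConvexOn ℝ Set.univ f)
    (c : ℝ) (hc : 0 < c)
    (x : JVec m n) (hx : ∀ i, x i ∈ X i)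
    (u : JVec m n) (huX : ∀ i, u i ∈ X i)
    (hu : ∀ i : Fin m, ∀ z ∈ X i,
      f (upd x i (u i)) + c * ‖u i - x i‖ ^ 2 ≤ f (upd x i z) + c * ‖z - x i‖ ^ 2) :
    (m : ℝ) * f u ≤ m * f x - c * ‖u - x‖ ^ 2
      + ((m : ℝ) - 1) * ⟪u - x, gradient f u⟫ :=
  stmt_16_general X f hf hfc c x hx u hu
end
end

section
/- Let c > 0, x ∈ X, and for each i = 1,…,m let u^i ∈ X^i minimize z^i ↦ f(z^i, x^{-i}) + c‖z^i − x^i‖² over X^i; set u = (u^1,…,u^m). Then (u − x)ᵀ∇f(u) ≤ (√m · L − 2c)‖u − x‖². -/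
open Matrix Filter Topology
open scoped RealInnerProductSpace

noncomputable section

/-! Each block `uⁱ` satisfies the first-order optimality condition of its proximal subproblem,
`⟪uⁱ - xⁱ, ∇ᵢf(uⁱ, x⁻ⁱ)⟫ ≤ -2c‖uⁱ - xⁱ‖²`. Replacing `∇ᵢf(uⁱ, x⁻ⁱ)` by `∇ᵢf(u)` costs at most
`L‖u - (uⁱ, x⁻ⁱ)‖ ≤ L‖u - x‖` per unit of `‖uⁱ - xⁱ‖`, and summing over the blocks,
Cauchy–Schwarz bounds `∑ᵢ ‖uⁱ - xⁱ‖` by `√m ‖u - x‖`. -/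

theorem IsMinOn.hasFDerivAt_apply_sub_nonneg {F : Type*} [NormedAddCommGroup F]
    [NormedSpace ℝ F] {φ : F → ℝ} {φ' : F →L[ℝ] ℝ} {S : Set F} {a b : F}
    (h : IsMinOn φ S a) (hS : Convex ℝ S) (ha : a ∈ S) (hb : b ∈ S) (hφ : HasFDerivAt φ φ' a) :
    0 ≤ φ' (b - a) :=
  h.localize.hasFDerivWithinAt_nonneg hφ.hasFDerivWithinAt
    (sub_mem_posTangentConeAt_of_segment_subset (hS.segment_subset ha hb))

namespace PiLp

section Norm

variable {ι : Type*} [Fintype ι] {E : ι → Type*} [∀ i, SeminormedAddCommGroup (E i)]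

theorem sum_norm_le_sqrt_card_mul_norm (v : PiLp 2 E) :
    ∑ i, ‖v i‖ ≤ √(Fintype.card ι) * ‖v‖ := by
  simpa [norm_eq_of_L2 v] using Real.sum_mul_le_sqrt_mul_sqrt Finset.univ 1 (‖v ·‖)

theorem norm_sub_toLp_update_le [DecidableEq ι] (u x : PiLp 2 E) (i : ι) :
    ‖u - WithLp.toLp 2 (Function.update x i (u i))‖ ≤ ‖u - x‖ := by
  simp only [norm_eq_of_L2 (_ - _)]
  gcongr with j
  rcases eq_or_ne j i with rfl | hj
  · simp
  · simp [hj]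

end Norm

section Gradient

variable {ι : Type*} [Fintype ι] [DecidableEq ι] {E : ι → Type*}
  [∀ i, NormedAddCommGroup (E i)] [∀ i, InnerProductSpace ℝ (E i)]

theorem inner_single_right (v : PiLp 2 E) (i : ι) (a : E i) :
    ⟪v, single 2 i a⟫ = ⟪v i, a⟫ := by
  rw [inner_apply, Finset.sum_eq_single i]
  · rw [single_eq_same]
  · intro j _ hj
    rw [single_eq_of_ne _ hj, inner_zero_right]
  · simp

variable [∀ i, CompleteSpace (E i)]

theorem hasGradientAt_toLp_update {f : PiLp 2 E → ℝ} {g x : PiLp 2 E} {i : ι} {z : E i}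
    (hf : HasGradientAt f g (WithLp.toLp 2 (Function.update x i z))) :
    HasGradientAt (fun y => f (WithLp.toLp 2 (Function.update x i y))) (g i) z := by
  have hupd := (continuousLinearEquiv 2 ℝ E).symm.hasFDerivAt.comp z (hasFDerivAt_update x z)
  rw [hasGradientAt_iff_hasFDerivAt] at hf ⊢
  refine (hf.comp z hupd).congr_fderiv ?_
  ext a
  simp only [ContinuousLinearMap.comp_apply, InnerProductSpace.toDual_apply_apply]
  rw [← inner_single_right]
  congr 1
  ext j
  rcases eq_or_ne j i with rfl | hj <;> simp [*]

theorem inner_sub_gradient_apply_le_of_isMinOn {f : PiLp 2 E → ℝ} {x : PiLp 2 E} {i : ι}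
    {S : Set (E i)} {a : E i} {c : ℝ} (hS : Convex ℝ S) (hxS : x i ∈ S) (haS : a ∈ S)
    (hf : DifferentiableAt ℝ f (WithLp.toLp 2 (Function.update x i a)))
    (hmin : IsMinOn (fun z => f (WithLp.toLp 2 (Function.update x i z)) + c * ‖z - x i‖ ^ 2)
      S a) :
    ⟪a - x i, gradient f (WithLp.toLp 2 (Function.update x i a)) i⟫ ≤
      -(2 * c) * ‖a - x i‖ ^ 2 := by
  have hblock := (hasGradientAt_toLp_update hf.hasGradientAt).hasFDerivAt
  have hprox := (((hasFDerivAt_id a).sub_const (x i)).norm_sq).const_mul c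
  have hopt := hmin.hasFDerivAt_apply_sub_nonneg hS haS hxS (hblock.add hprox)
  simp only [id_eq, ContinuousLinearMap.comp_id, _root_.add_apply,
    InnerProductSpace.toDual_apply_apply, _root_.smul_apply, coe_innerSL_apply, nsmul_eq_mul,
    Nat.cast_ofNat, smul_eq_mul] at hopt
  rw [← neg_sub a (x i), inner_neg_right, inner_neg_right, real_inner_self_eq_norm_sq,
    real_inner_comm] at hopt
  linarith

end Gradient

end PiLp

theorem stmt_17_general {m : ℕ} {n : Fin m → ℕ}
    (X : ∀ i : Fin m, Set (EuclideanSpace ℝ (Fin (n i))))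
    (hXcvx : ∀ i, Convex ℝ (X i))
    (f : JVec m n → ℝ)
    (hf : ContDiff ℝ 1 f)
    (L : ℝ) (hL : 0 < L)
    (hLip : ∀ a b : JVec m n, (∀ i, a i ∈ X i) → (∀ i, b i ∈ X i) →
      ‖gradient f a - gradient f b‖ ≤ L * ‖a - b‖)
    (c : ℝ)
    (x : JVec m n) (hx : ∀ i, x i ∈ X i)
    (u : JVec m n) (huX : ∀ i, u i ∈ X i)
    (hu : ∀ i : Fin m, ∀ z ∈ X i,
      f (upd x i (u i)) + c * ‖u i - x i‖ ^ 2 ≤ f (upd x i z) + c * ‖z - x i‖ ^ 2) :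
    ⟪u - x, gradient f u⟫ ≤ (Real.sqrt m * L - 2 * c) * ‖u - x‖ ^ 2 := by
  have hupdX : ∀ i j, upd x i (u i) j ∈ X j := by
    intro i j
    rcases eq_or_ne j i with rfl | hj
    · simpa [upd] using huX j
    · simpa [upd, hj] using hx j
  have hblock : ∀ i, ⟪(u - x) i, gradient f u i⟫ ≤
      L * ‖u - x‖ * ‖(u - x) i‖ - 2 * c * ‖(u - x) i‖ ^ 2 := by
    intro i
    have hopt : ⟪(u - x) i, gradient f (upd x i (u i)) i⟫ ≤ -(2 * c) * ‖(u - x) i‖ ^ 2 :=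
      PiLp.inner_sub_gradient_apply_le_of_isMinOn (hXcvx i) (hx i) (huX i)
        ((hf.differentiable one_ne_zero) _) (isMinOn_iff.mpr (hu i))
    have hlip : ⟪(u - x) i, (gradient f u - gradient f (upd x i (u i))) i⟫ ≤
        ‖(u - x) i‖ * (L * ‖u - x‖) := calc
      _ ≤ ‖(u - x) i‖ * ‖gradient f u - gradient f (upd x i (u i))‖ :=
        (real_inner_le_norm _ _).trans (by gcongr; exact PiLp.norm_apply_le _ i)
      _ ≤ ‖(u - x) i‖ * (L * ‖u - x‖) := by
        gcongr
        exact (hLip _ _ huX (hupdX i)).trans (by gcongr; exact PiLp.norm_sub_toLp_update_le u x i)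
    rw [PiLp.sub_apply _ (gradient f u), inner_sub_right] at hlip
    linarith
  calc ⟪u - x, gradient f u⟫ = ∑ i, ⟪(u - x) i, gradient f u i⟫ := PiLp.inner_apply _ _
    _ ≤ ∑ i, (L * ‖u - x‖ * ‖(u - x) i‖ - 2 * c * ‖(u - x) i‖ ^ 2) :=
      Finset.sum_le_sum fun i _ => hblock i
    _ = L * ‖u - x‖ * ∑ i, ‖(u - x) i‖ - 2 * c * ‖u - x‖ ^ 2 := by
      rw [Finset.sum_sub_distrib, ← Finset.mul_sum, ← Finset.mul_sum, PiLp.norm_sq_eq_of_L2]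
    _ ≤ L * ‖u - x‖ * (√m * ‖u - x‖) - 2 * c * ‖u - x‖ ^ 2 := by
      gcongr
      simpa using PiLp.sum_norm_le_sqrt_card_mul_norm (u - x)
    _ = (Real.sqrt m * L - 2 * c) * ‖u - x‖ ^ 2 := by ring

/-- If each `uⁱ ∈ Xⁱ` minimizes `zⁱ ↦ f(zⁱ, x^{-i}) + c‖zⁱ − xⁱ‖²` over `Xⁱ`, then
`(u − x)ᵀ∇f(u) ≤ (√m L − 2c)‖u − x‖²`. -/
theorem stmt_17 {m : ℕ} {n : Fin m → ℕ}
    (X : ∀ i : Fin m, Set (EuclideanSpace ℝ (Fin (n i))))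
    (hXne : ∀ i, (X i).Nonempty)
    (hXcpt : ∀ i, IsCompact (X i))
    (hXcvx : ∀ i, Convex ℝ (X i))
    (f : JVec m n → ℝ)
    (hf : ContDiff ℝ 1 f)
    (hfc : ConvexOn ℝ Set.univ f)
    (L : ℝ) (hL : 0 < L)
    (hLip : ∀ a b : JVec m n, (∀ i, a i ∈ X i) → (∀ i, b i ∈ X i) →
      ‖gradient f a - gradient f b‖ ≤ L * ‖a - b‖)
    (c : ℝ) (hc : 0 < c)
    (x : JVec m n) (hx : ∀ i, x i ∈ X i)
    (u : JVec m n) (huX : ∀ i, u i ∈ X i)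
    (hu : ∀ i : Fin m, ∀ z ∈ X i,
      f (upd x i (u i)) + c * ‖u i - x i‖ ^ 2 ≤ f (upd x i z) + c * ‖z - x i‖ ^ 2) :
    ⟪u - x, gradient f u⟫ ≤ (Real.sqrt m * L - 2 * c) * ‖u - x‖ ^ 2 :=
  stmt_17_general X hXcvx f hf L hL hLip c x hx u huX hu
end
end
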